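/- arXiv:1210.3684 — 2 statements merged into one kernel-verified Lean document; each statement's English description precedes it below -/
import Mathlib

section
/- The 1/(m−1) performance bound for the Greedy algorithm is tight: for the n×n instance with q_{11} = 1, q_{1j} = q_{j1} = −n for j ≥ 2, q_{jj} = 1 for j ≥ 2, all other entries 0, and c = d = 0, the optimal objective value is m − 1 (attained by x = y = (0,1,...,1)ᵀ), while the Greedy algorithm (which fixes x_1 = 1 first) produces a solution of objective value 1. -/
/-!
Write `n = k + 1`. For this matrix the objective is
`x₀y₀ + ∑_{i ≥ 1} (xᵢyᵢ - n (x₀yᵢ + xᵢy₀))`, and on `[0,1]` each summand is at most `1 - x₀y₀`,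
so every binary pair scores at most `x₀y₀ + k (1 - x₀y₀) ≤ k`, with equality at `x = y = (0,1,…,1)`.
Greedy first sets `x₀ = 1` (best response `y = e₀`, value `1`). Any further `xₜ = 1` makes every
column sum `∑ᵢ qᵢⱼ xᵢ` nonpositive, so the best response is `y = 0`, of value `0`, and greedy
rejects it.
-/

noncomputable def bqpObj {m n : ℕ} (Q : Fin m → Fin n → ℝ) (c : Fin m → ℝ) (d : Fin n → ℝ)
    (x : Fin m → ℝ) (y : Fin n → ℝ) : ℝ :=
  ∑ i, ∑ j, Q i j * x i * y j + ∑ i, c i * x i + ∑ j, d j * y j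

def isBinary {k : ℕ} (x : Fin k → ℝ) : Prop := ∀ i, x i = 0 ∨ x i = 1

open Classical in
noncomputable def yOpt {m n : ℕ} (Q : Fin m → Fin n → ℝ) (d : Fin n → ℝ)
    (x : Fin m → ℝ) : Fin n → ℝ :=
  fun j => if 0 < (∑ i, Q i j * x i) + d j then 1 else 0

open Classical in
noncomputable def greedyX {m n : ℕ} (Q : Fin m → Fin n → ℝ) (c : Fin m → ℝ) (d : Fin n → ℝ) :
    ℕ → (Fin m → ℝ)
  | 0 => fun _ => 0
  | (t + 1) =>
      let s := greedyX Q c d t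
      if h : t < m then
        let s1 := Function.update s ⟨t, h⟩ 1
        if bqpObj Q c d s (yOpt Q d s) < bqpObj Q c d s1 (yOpt Q d s1) then s1 else s
      else s

/-- The tight-example matrix: q₁₁ = 1, q₁ⱼ = qⱼ₁ = −n for j ≥ 2, qⱼⱼ = 1 for j ≥ 2, else 0. -/
noncomputable def tightQ (n : ℕ) : Fin n → Fin n → ℝ := fun i j =>
  if i.val = 0 ∧ j.val = 0 then 1
  else if i.val = 0 ∨ j.val = 0 then -(n : ℝ)
  else if i = j then 1 else 0

section Generic

variable {m n : ℕ} (Q : Fin m → Fin n → ℝ) (c : Fin m → ℝ) (d : Fin n → ℝ)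

noncomputable def bqpValue (x : Fin m → ℝ) : ℝ := bqpObj Q c d x (yOpt Q d x)

theorem bqpObj_zero_right (x : Fin m → ℝ) :
    bqpObj Q c d x (fun _ => 0) = ∑ i, c i * x i := by
  simp [bqpObj]

theorem sum_mul_single_one (a : Fin m) (j : Fin n) :
    ∑ i, Q i j * (Pi.single a 1 : Fin m → ℝ) i = Q a j := by
  simp [Pi.single_apply]

variable {Q d} in
theorem yOpt_eq_zero {x : Fin m → ℝ} (h : ∀ j, ∑ i, Q i j * x i + d j ≤ 0) :
    yOpt Q d x = fun _ => 0 := by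
  funext j
  simp [yOpt, (h j).not_gt]

theorem greedyX_succ_of_lt {t : ℕ} (ht : t < m)
    (h : bqpValue Q c d (greedyX Q c d t) <
      bqpValue Q c d (Function.update (greedyX Q c d t) ⟨t, ht⟩ 1)) :
    greedyX Q c d (t + 1) = Function.update (greedyX Q c d t) ⟨t, ht⟩ 1 := by
  rw [greedyX]
  simp only [dif_pos ht]
  exact if_pos h

theorem greedyX_succ_of_not_lt {t : ℕ} (ht : t < m)
    (h : ¬ bqpValue Q c d (greedyX Q c d t) <
      bqpValue Q c d (Function.update (greedyX Q c d t) ⟨t, ht⟩ 1)) :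
    greedyX Q c d (t + 1) = greedyX Q c d t := by
  rw [greedyX]
  simp only [dif_pos ht]
  exact if_neg h

end Generic

theorem isBinary.nonneg {k : ℕ} {x : Fin k → ℝ} (hx : isBinary x) (i : Fin k) : 0 ≤ x i := by
  rcases hx i with h | h <;> simp [h]

theorem isBinary.le_one {k : ℕ} {x : Fin k → ℝ} (hx : isBinary x) (i : Fin k) : x i ≤ 1 := by
  rcases hx i with h | h <;> simp [h]

section Tight

variable {k : ℕ}

@[simp] theorem tightQ_zero_zero : tightQ (k + 1) 0 0 = 1 := by simp [tightQ]

@[simp] theorem tightQ_zero_succ (j : Fin k) : tightQ (k + 1) 0 j.succ = -((k : ℝ) + 1) := by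
  simp [tightQ]

@[simp] theorem tightQ_succ_zero (i : Fin k) : tightQ (k + 1) i.succ 0 = -((k : ℝ) + 1) := by
  simp [tightQ]

@[simp] theorem tightQ_succ_succ (i j : Fin k) :
    tightQ (k + 1) i.succ j.succ = if i = j then 1 else 0 := by
  simp [tightQ]

theorem bqpObj_tightQ (x y : Fin (k + 1) → ℝ) :
    bqpObj (tightQ (k + 1)) (fun _ => 0) (fun _ => 0) x y =
      x 0 * y 0 + ∑ i : Fin k,
        (x i.succ * y i.succ - ((k : ℝ) + 1) * (x 0 * y i.succ + x i.succ * y 0)) := by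
  simp only [bqpObj, zero_mul, Finset.sum_const_zero, add_zero, Fin.sum_univ_succ,
    tightQ_zero_zero, tightQ_zero_succ, tightQ_succ_zero, tightQ_succ_succ, ite_mul,
    Finset.sum_ite_eq, Finset.mem_univ, if_true, one_mul]
  rw [add_assoc, ← Finset.sum_add_distrib]
  congr 1
  exact Finset.sum_congr rfl fun i _ => by ring

theorem sub_mul_add_le_one_sub_mul {a b u v N : ℝ} (ha₀ : 0 ≤ a) (ha₁ : a ≤ 1) (hb₀ : 0 ≤ b)
    (hb₁ : b ≤ 1) (hu₀ : 0 ≤ u) (hu₁ : u ≤ 1) (hv₀ : 0 ≤ v) (hv₁ : v ≤ 1) (hN : 1 ≤ N) :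
    u * v - N * (a * v + u * b) ≤ 1 - a * b := by
  nlinarith [mul_nonneg (sub_nonneg.2 ha₁) (sub_nonneg.2 hv₁), mul_nonneg hu₀ hb₀,
    mul_nonneg ha₀ hv₀, mul_nonneg (sub_nonneg.2 hu₁) (sub_nonneg.2 hb₁)]

theorem yOpt_tightQ_single_zero :
    yOpt (tightQ (k + 1)) (fun _ => 0) (Pi.single 0 1) = Pi.single 0 1 := by
  funext j
  cases j using Fin.cases with
  | zero => simp [yOpt, sum_mul_single_one]
  | succ j =>
    simp only [yOpt, sum_mul_single_one, tightQ_zero_succ, add_zero]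
    rw [if_neg (by linarith [(k.cast_nonneg : (0 : ℝ) ≤ k)])]
    simp

theorem yOpt_tightQ_update_single_zero (t : Fin k) :
    yOpt (tightQ (k + 1)) (fun _ => 0) (Function.update (Pi.single 0 1) t.succ 1) =
      fun _ => 0 := by
  refine yOpt_eq_zero fun j => ?_
  cases j using Fin.cases with
  | zero =>
    simp [Fin.sum_univ_succ, Function.update_apply, Pi.single_apply]
  | succ j =>
    have hk : (0 : ℝ) ≤ k := k.cast_nonneg
    simp [Fin.sum_univ_succ, Function.update_apply, Pi.single_apply]
    split_ifs <;> linarith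

theorem bqpValue_tightQ_zero :
    bqpValue (tightQ (k + 1)) (fun _ => 0) (fun _ => 0) (fun _ => 0) = 0 := by
  rw [bqpValue, yOpt_eq_zero fun j => by simp, bqpObj_zero_right]
  simp

theorem bqpValue_tightQ_single_zero :
    bqpValue (tightQ (k + 1)) (fun _ => 0) (fun _ => 0) (Pi.single 0 1) = 1 := by
  rw [bqpValue, yOpt_tightQ_single_zero, bqpObj_tightQ]
  simp

theorem bqpValue_tightQ_update_single_zero (t : Fin k) :
    bqpValue (tightQ (k + 1)) (fun _ => 0) (fun _ => 0)
      (Function.update (Pi.single 0 1) t.succ 1) = 0 := by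
  rw [bqpValue, yOpt_tightQ_update_single_zero, bqpObj_zero_right]
  simp

theorem greedyX_tightQ {t : ℕ} (ht : t ≤ k) :
    greedyX (tightQ (k + 1)) (fun _ => 0) (fun _ => 0) (t + 1) = Pi.single 0 1 := by
  induction t with
  | zero =>
    have hstart : greedyX (tightQ (k + 1)) (fun _ => 0) (fun _ => 0) 0 = fun _ => 0 := rfl
    refine greedyX_succ_of_lt _ _ _ k.succ_pos ?_
    rw [hstart, bqpValue_tightQ_zero]
    exact zero_lt_one.trans_eq bqpValue_tightQ_single_zero.symm
  | succ t ih =>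
    have hlt : t + 1 < k + 1 := by omega
    have hprev := ih (by omega)
    refine (greedyX_succ_of_not_lt _ _ _ hlt ?_).trans hprev
    rw [hprev, bqpValue_tightQ_single_zero,
      show (⟨t + 1, hlt⟩ : Fin (k + 1)) = Fin.succ ⟨t, by omega⟩ from rfl,
      bqpValue_tightQ_update_single_zero]
    norm_num

theorem bqpObj_tightQ_indicator_ne_zero :
    bqpObj (tightQ (k + 1)) (fun _ => 0) (fun _ => 0)
      (fun i => if i.val = 0 then 0 else 1) (fun j => if j.val = 0 then 0 else 1) = k := by
  simp [bqpObj_tightQ]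

theorem bqpObj_tightQ_le (hk : 1 ≤ k) {x y : Fin (k + 1) → ℝ} (hx : isBinary x)
    (hy : isBinary y) : bqpObj (tightQ (k + 1)) (fun _ => 0) (fun _ => 0) x y ≤ k := by
  have hk' : (1 : ℝ) ≤ k := by exact_mod_cast hk
  have hN : (1 : ℝ) ≤ k + 1 := by linarith
  have hxy : 0 ≤ x 0 * y 0 := mul_nonneg (hx.nonneg 0) (hy.nonneg 0)
  rw [bqpObj_tightQ]
  calc _ ≤ x 0 * y 0 + ∑ _i : Fin k, (1 - x 0 * y 0) := by
        refine add_le_add_right (Finset.sum_le_sum fun i _ => ?_) (x 0 * y 0)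
        exact sub_mul_add_le_one_sub_mul (hx.nonneg 0) (hx.le_one 0) (hy.nonneg 0)
          (hy.le_one 0) (hx.nonneg _) (hx.le_one _) (hy.nonneg _) (hy.le_one _) hN
    _ = k - (k - 1) * (x 0 * y 0) := by
        simp only [Finset.sum_const, Finset.card_univ, Fintype.card_fin, nsmul_eq_mul]
        ring
    _ ≤ k := by nlinarith

end Tight

/-- tightness of the 1/(m−1) bound for the Greedy algorithm.  On the tight
example (m = n, c = d = 0), the optimal value is m − 1, attained by x = y = (0,1,…,1)ᵀ,
while the Greedy solution has objective value 1. -/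
theorem greedy_bound_tight {n : ℕ} (hn : 2 ≤ n) :
    isBinary (fun i : Fin n => if i.val = 0 then 0 else 1) ∧
    bqpObj (tightQ n) (fun _ => 0) (fun _ => 0)
        (fun i : Fin n => if i.val = 0 then 0 else 1)
        (fun j : Fin n => if j.val = 0 then 0 else 1) = (n : ℝ) - 1 ∧
    (∀ x y, isBinary x → isBinary y →
      bqpObj (tightQ n) (fun _ => 0) (fun _ => 0) x y ≤ (n : ℝ) - 1) ∧
    (∀ i : Fin n, i.val = 0 → (greedyX (tightQ n) (fun _ => 0) (fun _ => 0) n) i = 1) ∧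
    bqpObj (tightQ n) (fun _ => 0) (fun _ => 0)
        (greedyX (tightQ n) (fun _ => 0) (fun _ => 0) n)
        (yOpt (tightQ n) (fun _ => 0) (greedyX (tightQ n) (fun _ => 0) (fun _ => 0) n))
      = 1 := by
  obtain ⟨k, rfl⟩ : ∃ k, n = k + 1 := ⟨n - 1, by omega⟩
  have hcast : ((k + 1 : ℕ) : ℝ) - 1 = k := by push_cast; ring
  have hgreedy := greedyX_tightQ (le_refl k)
  rw [hcast]
  refine ⟨fun i => ?_, bqpObj_tightQ_indicator_ne_zero,
    fun x y hx hy => bqpObj_tightQ_le (by omega) hx hy, fun i hi => ?_, ?_⟩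
  · by_cases h : i.val = 0 <;> simp [h]
  · rw [hgreedy, show i = 0 from Fin.ext hi]
    simp
  · rw [hgreedy]
    exact bqpValue_tightQ_single_zero
end

section
/- For the tight-example matrix Q (q_{11}=1; q_{1j}=q_{j1}=−n for j≥2; q_{jj}=1 for j≥2; else 0) with c = d = 0: any feasible solution with x_1 = 1 has objective value at most 1, and the solution x = y = (0,1,...,1)ᵀ has objective value n − 1, which is optimal. -/
/-- Objective with c = d = 0: f(x,y) = ∑ᵢⱼ qᵢⱼ xᵢ yⱼ. -/
noncomputable def quadObj {n : ℕ} (Q : Fin n → Fin n → ℝ)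
    (x y : Fin n → ℝ) : ℝ :=
  ∑ i, ∑ j, Q i j * x i * y j

/-! With `n = m + 1` and `X = ∑ᵢ xᵢ₊₁`, `Y = ∑ⱼ yⱼ₊₁`, `S = ∑ᵢ xᵢ₊₁ yᵢ₊₁`, the objective is
`x₀ y₀ - n (x₀ Y + y₀ X) + S`. For binary vectors `S ≤ Y` and `S ≤ m`. If `x₀ = 1` the penalty
`n Y` outweighs `S`, leaving at most `y₀ ≤ 1`; if `x₀ = 0` the objective is at most `S ≤ m`,
which the all-ones tail attains. -/

open Finset

namespace isBinary

variable {k : ℕ} {x y : Fin k → ℝ}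

lemma nonneg_s11 (hx : isBinary x) (i : Fin k) : 0 ≤ x i := by
  rcases hx i with h | h <;> simp [h]

lemma le_one_s11 (hx : isBinary x) (i : Fin k) : x i ≤ 1 := by
  rcases hx i with h | h <;> simp [h]

lemma comp {j : ℕ} (hx : isBinary x) (f : Fin j → Fin k) : isBinary (x ∘ f) :=
  fun i => hx (f i)

lemma sum_mul_le_sum_right (hx : isBinary x) (hy : isBinary y) :
    ∑ i, x i * y i ≤ ∑ i, y i :=
  sum_le_sum fun i _ => mul_le_of_le_one_left (hy.nonneg_s11 i) (hx.le_one_s11 i)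

lemma sum_mul_le_card (hx : isBinary x) (hy : isBinary y) : ∑ i, x i * y i ≤ k := by
  calc ∑ i, x i * y i ≤ ∑ i, y i := hx.sum_mul_le_sum_right hy
    _ ≤ ∑ _i : Fin k, (1 : ℝ) := sum_le_sum fun i _ => hy.le_one_s11 i
    _ = k := by simp

end isBinary

section TightExample

variable {m : ℕ} {x y : Fin (m + 1) → ℝ}

lemma quadObj_tightQ_succ (x y : Fin (m + 1) → ℝ) :
    quadObj (tightQ (m + 1)) x y =
      x 0 * y 0 - (m + 1) * (x 0 * ∑ j : Fin m, y j.succ + y 0 * ∑ i : Fin m, x i.succ)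
        + ∑ i : Fin m, x i.succ * y i.succ := by
  simp [quadObj, tightQ, Fin.sum_univ_succ, sum_add_distrib, ← sum_mul, ← mul_sum]
  ring

lemma quadObj_tightQ_le_one_of_head_eq_one (hx : isBinary x) (hy : isBinary y) (hx0 : x 0 = 1) :
    quadObj (tightQ (m + 1)) x y ≤ 1 := by
  have hS := (hx.comp Fin.succ).sum_mul_le_sum_right (hy.comp Fin.succ)
  have hX : 0 ≤ ∑ i : Fin m, x i.succ := sum_nonneg fun i _ => hx.nonneg_s11 _
  have hY : 0 ≤ ∑ i : Fin m, y i.succ := sum_nonneg fun i _ => hy.nonneg_s11 _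
  simp only [Function.comp_apply] at hS
  rw [quadObj_tightQ_succ, hx0]
  nlinarith [hy.nonneg_s11 0, hy.le_one_s11 0, mul_nonneg (hy.nonneg_s11 0) hX]

lemma quadObj_tightQ_le_of_head_eq_zero (hx : isBinary x) (hy : isBinary y) (hx0 : x 0 = 0) :
    quadObj (tightQ (m + 1)) x y ≤ m := by
  have hS := (hx.comp Fin.succ).sum_mul_le_card (hy.comp Fin.succ)
  have hX : 0 ≤ ∑ i : Fin m, x i.succ := sum_nonneg fun i _ => hx.nonneg_s11 _
  simp only [Function.comp_apply] at hS
  rw [quadObj_tightQ_succ, hx0]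
  nlinarith [mul_nonneg (hy.nonneg_s11 0) hX]

lemma quadObj_tightQ_le (hm : 1 ≤ m) (hx : isBinary x) (hy : isBinary y) :
    quadObj (tightQ (m + 1)) x y ≤ m := by
  rcases hx 0 with hx0 | hx0
  · exact quadObj_tightQ_le_of_head_eq_zero hx hy hx0
  · calc quadObj (tightQ (m + 1)) x y ≤ 1 := quadObj_tightQ_le_one_of_head_eq_one hx hy hx0
      _ ≤ m := by exact_mod_cast hm

lemma quadObj_tightQ_tail_ones :
    quadObj (tightQ (m + 1)) (fun i => if i.val = 0 then 0 else 1)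
      (fun j => if j.val = 0 then 0 else 1) = m := by
  simp [quadObj_tightQ_succ]

end TightExample

/-- in the tight example (n ≥ 3), any feasible solution with x₁ = 1 has
objective at most 1, and x = y = (0,1,…,1)ᵀ attains the optimal value n − 1. -/
theorem tight_example_properties {n : ℕ} (hn : 3 ≤ n) :
    (∀ (x y : Fin n → ℝ), isBinary x → isBinary y → (∀ i : Fin n, i.val = 0 → x i = 1) →
      quadObj (tightQ n) x y ≤ 1) ∧
    quadObj (tightQ n) (fun i => if i.val = 0 then 0 else 1)
        (fun j => if j.val = 0 then 0 else 1) = (n : ℝ) - 1 ∧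
    (∀ (x y : Fin n → ℝ), isBinary x → isBinary y →
      quadObj (tightQ n) x y ≤ (n : ℝ) - 1) := by
  obtain ⟨m, rfl⟩ : ∃ m, n = m + 1 := ⟨n - 1, by omega⟩
  push_cast
  simp only [add_sub_cancel_right]
  refine ⟨fun x y hx hy hx0 => quadObj_tightQ_le_one_of_head_eq_one hx hy (hx0 0 rfl),
    quadObj_tightQ_tail_ones, fun x y hx hy => quadObj_tightQ_le (by omega) hx hy⟩
end
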